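/- Let g = z + 3x²y + 3xy³ + y⁵, f₁ = x + y² − g², and h = y − 6(x+y²)²g + 8(x+y²)g³ − (16/5)g⁵ in ℚ[x,y,z]. Then the partial derivative cross terms satisfy: ∂f₁/∂x·∂h/∂y − ∂f₁/∂y·∂h/∂x has total degree at most 6, ∂f₁/∂x·∂h/∂z − ∂f₁/∂z·∂h/∂x has total degree at most 6, and ∂f₁/∂y·∂h/∂z − ∂f₁/∂z·∂h/∂y has total degree at most 6; hence the Poisson bracket [f₁,h], each of whose summands is such a 2×2 Jacobian minor multiplied by an element of degree 2, has degree at most 8, which is strictly less than min(deg f₁, deg h) = min(10, 25). -/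

import Mathlib

/-!
The three Jacobian minors of `(f₁, h)` are computed through the chain rule: `f₁` and `h - y` are
functions of `u = x + y²` and `g`, and the map `(u, g) ↦ (u - g², -6u²g + 8ug³ - 16/5 g⁵)` has
Jacobian determinant `-6u²`. Expanding the result, every minor has degree at most `6`, while
`f₁` and `h` specialise to polynomials of degree `10` and `25` on the `y`-axis.
-/

open MvPolynomial

theorem Derivation.map_ofNat {R A M : Type*} [CommSemiring R] [CommSemiring A] [Algebra R A]
    [AddCommMonoid M] [Module A M] [Module R M] (D : Derivation R A M) (n : ℕ) [n.AtLeastTwo] :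
    D (ofNat(n) : A) = 0 :=
  D.map_natCast n

namespace MvPolynomial

section CommSemiring

variable {σ R : Type*} [CommSemiring R] {p q : MvPolynomial σ R} {m n : ℕ}

theorem totalDegree_ofNat (k : ℕ) [k.AtLeastTwo] :
    (ofNat(k) : MvPolynomial σ R).totalDegree = 0 :=
  totalDegree_C (k : R)

theorem totalDegree_add_le_of_le (hp : p.totalDegree ≤ n) (hq : q.totalDegree ≤ n) :
    (p + q).totalDegree ≤ n :=
  (totalDegree_add p q).trans (max_le hp hq)

theorem totalDegree_mul_le_of_le (hp : p.totalDegree ≤ m) (hq : q.totalDegree ≤ n) :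
    (p * q).totalDegree ≤ m + n :=
  (totalDegree_mul p q).trans (add_le_add hp hq)

theorem natDegree_aeval_le_totalDegree_mul {d : ℕ} (φ : σ → Polynomial R)
    (hφ : ∀ i, (φ i).natDegree ≤ d) (p : MvPolynomial σ R) :
    (aeval φ p).natDegree ≤ p.totalDegree * d := by
  conv_lhs => rw [p.as_sum]
  rw [map_sum]
  refine Polynomial.natDegree_sum_le_of_forall_le _ _ fun s hs => ?_
  rw [aeval_monomial, Polynomial.algebraMap_eq]
  refine (Polynomial.natDegree_C_mul_le _ _).trans <| (Polynomial.natDegree_prod_le _ _).trans ?_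
  calc ∑ i ∈ s.support, (φ i ^ s i).natDegree
      ≤ ∑ i ∈ s.support, s i * d :=
        Finset.sum_le_sum fun i _ => Polynomial.natDegree_pow_le_of_le _ (hφ i)
    _ = (s.sum fun _ e => e) * d := by rw [Finsupp.sum, Finset.sum_mul]
    _ ≤ p.totalDegree * d := Nat.mul_le_mul_right d (le_totalDegree hs)

end CommSemiring

section CommRing

variable {σ R : Type*} [CommRing R]

theorem totalDegree_sub_le_of_le {p q : MvPolynomial σ R} {n : ℕ} (hp : p.totalDegree ≤ n)
    (hq : q.totalDegree ≤ n) : (p - q).totalDegree ≤ n :=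
  (totalDegree_sub p q).trans (max_le hp hq)

noncomputable def jacobianMinor (i j : σ) (p q : MvPolynomial σ R) : MvPolynomial σ R :=
  pderiv i p * pderiv j q - pderiv j p * pderiv i q

end CommRing

end MvPolynomial

namespace DrenskyYu

theorem jacobianMinor_eq {σ : Type*} (i j : σ) (u g y : MvPolynomial σ ℚ) :
    jacobianMinor i j (u - g ^ 2) (y - 6 * u ^ 2 * g + 8 * u * g ^ 3 - C (16 / 5) * g ^ 5) =
      jacobianMinor i j u y - 2 * g * jacobianMinor i j g y
        - 6 * u ^ 2 * jacobianMinor i j u g := by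
  have h16 : C (16 / 5 : ℚ) * 5 = (16 : MvPolynomial σ ℚ) := by
    rw [← map_ofNat C, ← map_ofNat C, ← C_mul]; norm_num
  simp only [jacobianMinor, map_sub, map_add, Derivation.leibniz, Derivation.leibniz_pow, pderiv_C,
    Derivation.map_ofNat, smul_eq_mul]
  linear_combination (-g ^ 4 * (pderiv i u * pderiv j g - pderiv j u * pderiv i g)) * h16

noncomputable def u : MvPolynomial (Fin 3) ℚ := X 0 + X 1 ^ 2

noncomputable def g : MvPolynomial (Fin 3) ℚ :=
  X 2 + 3 * X 0 ^ 2 * X 1 + 3 * X 0 * X 1 ^ 3 + X 1 ^ 5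

noncomputable def f : MvPolynomial (Fin 3) ℚ := u - g ^ 2

noncomputable def h : MvPolynomial (Fin 3) ℚ :=
  X 1 - 6 * u ^ 2 * g + 8 * u * g ^ 3 - C (16 / 5) * g ^ 5

theorem jacobianMinor_zero_one : jacobianMinor 0 1 f h =
    1 - 6 * X 1 ^ 3 * X 2 - 12 * X 0 * X 1 * X 2 - 30 * X 0 ^ 2 * X 1 ^ 4
      - 54 * X 0 ^ 3 * X 1 ^ 2 - 18 * X 0 ^ 4 := by
  rw [f, h, jacobianMinor_eq]
  simp only [jacobianMinor, u, g, map_add, Derivation.leibniz, Derivation.leibniz_pow,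
    Derivation.map_ofNat, pderiv_X_self, pderiv_X_of_ne, ne_eq, Fin.reduceEq, not_false_eq_true,
    smul_eq_mul, nsmul_eq_mul]
  ring

theorem jacobianMinor_zero_two : jacobianMinor 0 2 f h =
    -6 * X 1 ^ 4 - 12 * X 0 * X 1 ^ 2 - 6 * X 0 ^ 2 := by
  rw [f, h, jacobianMinor_eq]
  simp only [jacobianMinor, u, g, map_add, Derivation.leibniz, Derivation.leibniz_pow,
    Derivation.map_ofNat, pderiv_X_self, pderiv_X_of_ne, ne_eq, Fin.reduceEq, not_false_eq_true,
    smul_eq_mul, nsmul_eq_mul]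
  ring

theorem jacobianMinor_one_two : jacobianMinor 1 2 f h =
    2 * X 2 - 10 * X 1 ^ 5 - 18 * X 0 * X 1 ^ 3 - 6 * X 0 ^ 2 * X 1 := by
  rw [f, h, jacobianMinor_eq]
  simp only [jacobianMinor, u, g, map_add, Derivation.leibniz, Derivation.leibniz_pow,
    Derivation.map_ofNat, pderiv_X_self, pderiv_X_of_ne, ne_eq, Fin.reduceEq, not_false_eq_true,
    smul_eq_mul, nsmul_eq_mul]
  ring

theorem totalDegree_jacobianMinor_zero_one_le : (jacobianMinor 0 1 f h).totalDegree ≤ 6 := by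
  rw [jacobianMinor_zero_one]
  repeat' with_reducible first | apply totalDegree_add_le_of_le | apply totalDegree_sub_le_of_le
  all_goals simp [totalDegree_mul_of_isDomain, totalDegree_X_pow, totalDegree_X, totalDegree_ofNat]

theorem totalDegree_jacobianMinor_zero_two_le : (jacobianMinor 0 2 f h).totalDegree ≤ 6 := by
  rw [jacobianMinor_zero_two]
  repeat' with_reducible first | apply totalDegree_add_le_of_le | apply totalDegree_sub_le_of_le
  all_goals simp [totalDegree_mul_of_isDomain, totalDegree_X_pow, totalDegree_X, totalDegree_ofNat]

theorem totalDegree_jacobianMinor_one_two_le : (jacobianMinor 1 2 f h).totalDegree ≤ 6 := by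
  rw [jacobianMinor_one_two]
  repeat' with_reducible first | apply totalDegree_add_le_of_le | apply totalDegree_sub_le_of_le
  all_goals simp [totalDegree_mul_of_isDomain, totalDegree_X_pow, totalDegree_X, totalDegree_ofNat]

noncomputable def yAxis : Fin 3 → Polynomial ℚ := ![0, Polynomial.X, 0]

theorem le_totalDegree_of_le_natDegree_aeval_yAxis {p : MvPolynomial (Fin 3) ℚ} {n : ℕ}
    (hn : n ≤ (aeval yAxis p).natDegree) : n ≤ p.totalDegree := by
  have hφ (i : Fin 3) : (yAxis i).natDegree ≤ 1 := by fin_cases i <;> simp [yAxis]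
  simpa using hn.trans (natDegree_aeval_le_totalDegree_mul yAxis hφ p)

theorem aeval_yAxis_f : aeval yAxis f = Polynomial.X ^ 2 - Polynomial.X ^ 10 := by
  simp only [f, u, g, yAxis, map_sub, map_add, map_mul, map_pow, map_ofNat, aeval_X,
    Matrix.cons_val_zero, Matrix.cons_val_one, Matrix.cons_val_two, Matrix.head_cons,
    Matrix.tail_cons]
  ring

theorem aeval_yAxis_h : aeval yAxis h = Polynomial.X - 6 * Polynomial.X ^ 9
    + 8 * Polynomial.X ^ 17 - Polynomial.C (16 / 5) * Polynomial.X ^ 25 := by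
  simp only [h, u, g, yAxis, map_sub, map_add, map_mul, map_pow, map_ofNat, aeval_X,
    aeval_C, Polynomial.algebraMap_eq, Matrix.cons_val_zero, Matrix.cons_val_one,
    Matrix.cons_val_two, Matrix.head_cons, Matrix.tail_cons]
  ring

theorem ten_le_totalDegree_f : 10 ≤ f.totalDegree := by
  refine le_totalDegree_of_le_natDegree_aeval_yAxis (Eq.ge ?_)
  rw [aeval_yAxis_f]
  compute_degree!

theorem twentyFive_le_totalDegree_h : 25 ≤ h.totalDegree := by
  refine le_totalDegree_of_le_natDegree_aeval_yAxis (Eq.ge ?_)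
  rw [aeval_yAxis_h]
  compute_degree!

end DrenskyYu

theorem poisson_bracket_bound
    (g f₁ h : MvPolynomial (Fin 3) ℚ)
    (hg : g = X 2 + 3 * (X 0) ^ 2 * X 1 + 3 * X 0 * (X 1) ^ 3 + (X 1) ^ 5)
    (hf₁ : f₁ = X 0 + (X 1) ^ 2 - g ^ 2)
    (hh : h = X 1 - 6 * (X 0 + (X 1) ^ 2) ^ 2 * g + 8 * (X 0 + (X 1) ^ 2) * g ^ 3
        - C (16 / 5 : ℚ) * g ^ 5) :
    (pderiv 0 f₁ * pderiv 1 h - pderiv 1 f₁ * pderiv 0 h).totalDegree ≤ 6 ∧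
    (pderiv 0 f₁ * pderiv 2 h - pderiv 2 f₁ * pderiv 0 h).totalDegree ≤ 6 ∧
    (pderiv 1 f₁ * pderiv 2 h - pderiv 2 f₁ * pderiv 1 h).totalDegree ≤ 6 ∧
    (∀ u₁ u₂ u₃ : MvPolynomial (Fin 3) ℚ,
      u₁.totalDegree ≤ 2 → u₂.totalDegree ≤ 2 → u₃.totalDegree ≤ 2 →
      ((pderiv 0 f₁ * pderiv 1 h - pderiv 1 f₁ * pderiv 0 h) * u₁ +
       (pderiv 0 f₁ * pderiv 2 h - pderiv 2 f₁ * pderiv 0 h) * u₂ +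
       (pderiv 1 f₁ * pderiv 2 h - pderiv 2 f₁ * pderiv 1 h) * u₃).totalDegree ≤ 8) ∧
    8 < min f₁.totalDegree h.totalDegree := by
  obtain rfl : g = DrenskyYu.g := hg
  obtain rfl : f₁ = DrenskyYu.f := hf₁
  obtain rfl : h = DrenskyYu.h := hh
  have h₀₁ := DrenskyYu.totalDegree_jacobianMinor_zero_one_le
  have h₀₂ := DrenskyYu.totalDegree_jacobianMinor_zero_two_le
  have h₁₂ := DrenskyYu.totalDegree_jacobianMinor_one_two_le
  refine ⟨h₀₁, h₀₂, h₁₂, fun u₁ u₂ u₃ hu₁ hu₂ hu₃ => ?_, ?_⟩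
  · exact totalDegree_add_le_of_le (totalDegree_add_le_of_le (totalDegree_mul_le_of_le h₀₁ hu₁)
      (totalDegree_mul_le_of_le h₀₂ hu₂)) (totalDegree_mul_le_of_le h₁₂ hu₃)
  · have := DrenskyYu.ten_le_totalDegree_f
    have := DrenskyYu.twentyFive_le_totalDegree_h
    omega
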